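/- If a hyper-rectangle $R_0$ with all sides positive is subdivided by repeated bisection, always along a longest side, generating a nested sequence of hyper-rectangles $R_0 \supset R_1 \supset R_2 \supset \cdots$ each obtained from the previous by one bisection step, then the diagonal lengths of $R_k$ tend to $0$ as $k \to \infty$; in particular $\bigcap_k R_k$ is a single point. -/
import Mathlib

open Filter

/-- Repeated bisection along a longest side of a hyper-rectangle (keeping one half each time)
drives the diagonal lengths to 0, so the intersection of the nested rectangles is a point. -/
theorem bisection_diagonal_tendsto_zero {n : ℕ} (a b : ℕ → Fin n → ℝ)
    (h0 : ∀ i, a 0 i < b 0 i)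
    (hstep : ∀ k, ∃ j : Fin n, (∀ i, b k i - a k i ≤ b k j - a k j) ∧
      ((a (k + 1) = a k ∧ b (k + 1) = Function.update (b k) j ((a k j + b k j) / 2)) ∨
       (a (k + 1) = Function.update (a k) j ((a k j + b k j) / 2) ∧ b (k + 1) = b k))) :
    Filter.Tendsto (fun k => Real.sqrt (∑ i, (b k i - a k i) ^ 2)) Filter.atTop (nhds 0) ∧
    ∃ x : Fin n → ℝ, (⋂ k, Set.Icc (a k) (b k)) = {x} := by
  choose j hmax hcase using hstep
  -- the side-length recursion
  have hd : ∀ k i, b (k+1) i - a (k+1) i =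
      if i = j k then (b k i - a k i) / 2 else b k i - a k i := by
    intro k i
    rcases hcase k with ⟨ha', hb'⟩ | ⟨ha', hb'⟩
    · rw [ha', hb', Function.update_apply]
      split_ifs with h
      · subst h; ring
      · rfl
    · rw [ha', hb', Function.update_apply]
      split_ifs with h
      · subst h; ring
      · rfl
  -- positivity of side lengths
  have hpos : ∀ k i, 0 < b k i - a k i := by
    intro k
    induction k with
    | zero => intro i; linarith [h0 i]
    | succ k ih =>
      intro i
      rw [hd k i]
      split_ifs with h
      · linarith [ih i]
      · exact ih i
  -- monotonicity of endpoints
  have hab_step : ∀ k i, a k i ≤ a (k+1) i ∧ b (k+1) i ≤ b k i := by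
    intro k i
    have hx := hpos k i
    rcases hcase k with ⟨ha', hb'⟩ | ⟨ha', hb'⟩
    · rw [ha', hb', Function.update_apply]
      refine ⟨le_refl _, ?_⟩
      split_ifs with h
      · subst h; linarith
      · exact le_refl _
    · rw [ha', hb', Function.update_apply]
      refine ⟨?_, le_refl _⟩
      split_ifs with h
      · subst h; linarith
      · exact le_refl _
  have hamono : ∀ i, Monotone (fun k => a k i) :=
    fun i => monotone_nat_of_le_succ (fun k => (hab_step k i).1)
  have hbanti : ∀ i, Antitone (fun k => b k i) :=
    fun i => antitone_nat_of_succ_le (fun k => (hab_step k i).2)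
  have hab : ∀ k m i, a k i ≤ b m i := by
    intro k m i
    rcases le_total k m with h | h
    · exact le_trans (hamono i h) (by linarith [hpos m i])
    · exact le_trans (by linarith [hpos k i]) (hbanti i h)
  -- the sum of squares of side lengths
  set S : ℕ → ℝ := fun k => ∑ i, (b k i - a k i)^2 with hSdef
  have hSnonneg : ∀ k, 0 ≤ S k := fun k => Finset.sum_nonneg (fun i _ => sq_nonneg _)
  have hSstep : ∀ k, S (k+1) = S k - 3/4 * (b k (j k) - a k (j k))^2 := by
    intro k
    have h1 : ∑ i, ((b k i - a k i)^2 - (b (k+1) i - a (k+1) i)^2)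
        = 3/4 * (b k (j k) - a k (j k))^2 := by
      rw [Finset.sum_eq_single (j k)]
      · rw [hd k (j k), if_pos rfl]; ring
      · intro i _ hi
        rw [hd k i, if_neg hi]; ring
      · intro h; exact absurd (Finset.mem_univ _) h
    have h2 : S k - S (k+1) = ∑ i, ((b k i - a k i)^2 - (b (k+1) i - a (k+1) i)^2) := by
      rw [Finset.sum_sub_distrib]
    linarith
  have hSle : ∀ k, S k ≤ (n : ℝ) * (b k (j k) - a k (j k))^2 := by
    intro k
    calc S k ≤ ∑ _i : Fin n, (b k (j k) - a k (j k))^2 := by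
          refine Finset.sum_le_sum (fun i _ => ?_)
          have h1 := hmax k i
          have h2 := hpos k i
          nlinarith
      _ = (n : ℝ) * (b k (j k) - a k (j k))^2 := by
          simp [Finset.sum_const, Finset.card_univ]
  -- tendsto of S
  have hStend : Tendsto S atTop (nhds 0) := by
    rcases Nat.eq_zero_or_pos n with hn | hn
    · subst hn
      have hS0 : S = fun _ => 0 := by
        funext k
        simp [hSdef]
      rw [hS0]
      exact tendsto_const_nhds
    · have hc : (0:ℝ) < (n:ℝ) := by exact_mod_cast hn
      have hc1 : (1:ℝ) ≤ (n:ℝ) := by exact_mod_cast hn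
      have hr0 : 0 ≤ 1 - 3/(4*(n:ℝ)) := by
        have : 3/(4*(n:ℝ)) ≤ 1 := by
          rw [div_le_one (by positivity)]
          linarith
        linarith
      have hr1 : 1 - 3/(4*(n:ℝ)) < 1 := by
        have : 0 < 3/(4*(n:ℝ)) := by positivity
        linarith
      have hrS : ∀ k, S (k+1) ≤ (1 - 3/(4*(n:ℝ))) * S k := by
        intro k
        have h1 := hSle k
        have h2 := hSstep k
        have h3 : 3/(4*(n:ℝ)) * S k ≤ 3/4 * (b k (j k) - a k (j k))^2 := by
          rw [div_mul_eq_mul_div, div_le_iff₀ (by positivity)]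
          calc 3 * S k ≤ 3 * ((n:ℝ) * (b k (j k) - a k (j k))^2) := by linarith
            _ = 3/4 * (b k (j k) - a k (j k))^2 * (4*(n:ℝ)) := by ring
        have h4 : (1 - 3/(4*(n:ℝ))) * S k = S k - 3/(4*(n:ℝ)) * S k := by ring
        linarith
      have hbound : ∀ k, S k ≤ S 0 * (1 - 3/(4*(n:ℝ))) ^ k := by
        intro k
        induction k with
        | zero => simp
        | succ k ih =>
          calc S (k+1) ≤ (1 - 3/(4*(n:ℝ))) * S k := hrS k
            _ ≤ (1 - 3/(4*(n:ℝ))) * (S 0 * (1 - 3/(4*(n:ℝ))) ^ k) := by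
                exact mul_le_mul_of_nonneg_left ih hr0
            _ = S 0 * (1 - 3/(4*(n:ℝ))) ^ (k+1) := by ring
      have hgeo : Tendsto (fun k => S 0 * (1 - 3/(4*(n:ℝ))) ^ k) atTop (nhds 0) := by
        have := (tendsto_pow_atTop_nhds_zero_of_lt_one hr0 hr1).const_mul (S 0)
        simpa using this
      exact squeeze_zero hSnonneg hbound hgeo
  have hsqrt : Tendsto (fun k => Real.sqrt (S k)) atTop (nhds 0) := by
    have := hStend.sqrt
    simpa using this
  refine ⟨hsqrt, ?_⟩
  -- each side length tends to 0
  have hdtend : ∀ i, Tendsto (fun k => b k i - a k i) atTop (nhds 0) := by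
    intro i
    refine squeeze_zero (fun k => (hpos k i).le) (fun k => ?_) hsqrt
    have h1 : (b k i - a k i)^2 ≤ S k :=
      Finset.single_le_sum (f := fun i => (b k i - a k i)^2)
        (fun i _ => sq_nonneg _) (Finset.mem_univ i)
    have := Real.sqrt_le_sqrt h1
    rwa [Real.sqrt_sq (hpos k i).le] at this
  -- the limit point
  set x : Fin n → ℝ := fun i => ⨆ k, a k i with hxdef
  have hbdd : ∀ i, BddAbove (Set.range fun k => a k i) := by
    intro i
    refine ⟨b 0 i, ?_⟩
    rintro _ ⟨k, rfl⟩
    exact hab k 0 i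
  have hax : ∀ k i, a k i ≤ x i := fun k i => le_ciSup (hbdd i) k
  have hxb : ∀ k i, x i ≤ b k i := fun k i => ciSup_le (fun m => hab m k i)
  have hxmem : ∀ k, x ∈ Set.Icc (a k) (b k) :=
    fun k => ⟨fun i => hax k i, fun i => hxb k i⟩
  refine ⟨x, Set.eq_singleton_iff_unique_mem.mpr ⟨Set.mem_iInter.mpr hxmem, ?_⟩⟩
  intro y hy
  funext i
  have hy' : ∀ k, a k i ≤ y i ∧ y i ≤ b k i := by
    intro k
    have hm := Set.mem_iInter.mp hy k
    exact ⟨hm.1 i, hm.2 i⟩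
  have h1 : y i - x i ≤ 0 := by
    refine ge_of_tendsto' (hdtend i) (fun k => ?_)
    have := hy' k
    have := hax k i
    linarith
  have h2 : x i - y i ≤ 0 := by
    refine ge_of_tendsto' (hdtend i) (fun k => ?_)
    have := hy' k
    have := hxb k i
    linarith
  linarith
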